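/- arXiv:2110.12933 — 6 statements merged into one kernel-verified Lean document; each statement's English description precedes it below -/
import Mathlib

section
/- Let K be a field and X = {x₁,…,xₙ}. Let I_ρ = (f₁,…,f_r)_ρ and J_ρ = (g₁,…,g_s)_ρ be finitely generated right ideals of K⟨X⟩. Let t be a new indeterminate, ι: K⟨X⟩ → K⟨X ∪ {t}⟩ the canonical embedding, and let H_ρ be the right ideal of K⟨X ∪ {t}⟩ generated by {t·ι(fᵢ) : 1 ≤ i ≤ r} ∪ {(1 − t)·ι(gⱼ) : 1 ≤ j ≤ s}. Then for every h ∈ K⟨X⟩: h ∈ I_ρ ∩ J_ρ if and only if ι(h) ∈ H_ρ. -/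
open scoped BigOperators

/-- The right ideal generated by a set `S`, i.e. the set of finite sums `∑ fᵢ * qᵢ`
with `fᵢ ∈ S` and `qᵢ` arbitrary ring elements. -/
def rightIdealSpan {A : Type*} [Semiring A] (S : Set A) : Set A :=
  {x | ∃ (d : ℕ) (f q : Fin d → A), (∀ i, f i ∈ S) ∧ x = ∑ i, f i * q i}

/-- The canonical embedding `K⟨x₁,…,xₙ⟩ → K⟨x₁,…,xₙ,t⟩` sending each `xᵢ` to `xᵢ`. -/
noncomputable def emb (K : Type*) [Field K] (n : ℕ) :
    FreeAlgebra K (Fin n) →ₐ[K] FreeAlgebra K (Fin (n + 1)) :=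
  FreeAlgebra.lift K fun i => FreeAlgebra.ι K i.castSucc

/-! Splitting `h = t·h + (1 - t)·h` shows that `I_ρ ∩ J_ρ` lands in `H_ρ`. Conversely, the
specializations `t ↦ 1` and `t ↦ 0` are retractions of `ι` that kill the `(1 - t)·ι(gⱼ)`,
respectively the `t·ι(fᵢ)`, so they turn a representation of `ι(h)` in `H_ρ` into one of `h`
in `I_ρ`, respectively in `J_ρ`. -/

section RightIdealSpan

variable {A : Type*} [Semiring A] {ι κ : Type*} [Fintype ι] [Fintype κ]

-- Repeated generators are merged by summing their coefficients.
theorem mem_rightIdealSpan_range_iff (v : ι → A) (x : A) :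
    x ∈ rightIdealSpan (Set.range v) ↔ ∃ q : ι → A, x = ∑ i, v i * q i := by
  classical
  constructor
  · rintro ⟨d, F, Q, hF, rfl⟩
    choose c hc using hF
    refine ⟨fun j => ∑ i ∈ Finset.univ.filter (fun i => c i = j), Q i, ?_⟩
    rw [← Finset.sum_fiberwise Finset.univ c (fun i => F i * Q i)]
    refine Finset.sum_congr rfl fun j _ => ?_
    rw [Finset.mul_sum]
    refine Finset.sum_congr rfl fun i hi => ?_
    rw [← hc i, (Finset.mem_filter.mp hi).2]
  · rintro ⟨q, rfl⟩
    let e := (Fintype.equivFin ι).symm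
    exact ⟨Fintype.card ι, v ∘ e, q ∘ e, fun i => ⟨e i, rfl⟩,
      (Equiv.sum_comp e (fun i => v i * q i)).symm⟩

theorem mem_rightIdealSpan_range_union_iff (u : ι → A) (v : κ → A) (x : A) :
    x ∈ rightIdealSpan (Set.range u ∪ Set.range v) ↔
      ∃ (p : ι → A) (q : κ → A), x = ∑ i, u i * p i + ∑ j, v j * q j := by
  rw [← Set.Sum.elim_range, mem_rightIdealSpan_range_iff]
  constructor
  · rintro ⟨q, rfl⟩
    exact ⟨q ∘ Sum.inl, q ∘ Sum.inr, Fintype.sum_sum_type _⟩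
  · rintro ⟨p, q, rfl⟩
    exact ⟨Sum.elim p q, by rw [Fintype.sum_sum_type]; rfl⟩

end RightIdealSpan

noncomputable def specializeTag (K : Type*) [Field K] (n : ℕ) (c : FreeAlgebra K (Fin n)) :
    FreeAlgebra K (Fin (n + 1)) →ₐ[K] FreeAlgebra K (Fin n) :=
  FreeAlgebra.lift K (Fin.lastCases c (FreeAlgebra.ι K))

section SpecializeTag

variable (K : Type*) [Field K] (n : ℕ) (c : FreeAlgebra K (Fin n))

theorem specializeTag_comp_emb : (specializeTag K n c).comp (emb K n) = AlgHom.id K _ :=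
  FreeAlgebra.hom_ext <| funext fun i => by simp [specializeTag, emb]

@[simp]
theorem specializeTag_emb (a : FreeAlgebra K (Fin n)) : specializeTag K n c (emb K n a) = a :=
  AlgHom.congr_fun (specializeTag_comp_emb K n c) a

@[simp]
theorem specializeTag_tag : specializeTag K n c (FreeAlgebra.ι K (Fin.last n)) = c := by
  simp [specializeTag]

end SpecializeTag

/-- **Intersection of two finitely generated right ideals via a tag variable.**
With `I_ρ = (f₁,…,f_r)_ρ`, `J_ρ = (g₁,…,g_s)_ρ ⊆ K⟨X⟩`, `t` the extra indeterminate of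
`K⟨X ∪ {t}⟩` and `H_ρ = (t·ι(fᵢ), (1−t)·ι(gⱼ))_ρ`, for every `h ∈ K⟨X⟩` we have
`h ∈ I_ρ ∩ J_ρ ↔ ι(h) ∈ H_ρ`. -/
theorem rightIdeal_intersection_tag (K : Type*) [Field K] (n r s : ℕ)
    (f : Fin r → FreeAlgebra K (Fin n)) (g : Fin s → FreeAlgebra K (Fin n))
    (h : FreeAlgebra K (Fin n)) :
    h ∈ rightIdealSpan (Set.range f) ∩ rightIdealSpan (Set.range g) ↔
      emb K n h ∈ rightIdealSpan
        ((Set.range fun i => FreeAlgebra.ι K (Fin.last n) * emb K n (f i)) ∪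
          (Set.range fun j => (1 - FreeAlgebra.ι K (Fin.last n)) * emb K n (g j))) := by
  set t := FreeAlgebra.ι K (Fin.last n)
  rw [Set.mem_inter_iff, mem_rightIdealSpan_range_iff, mem_rightIdealSpan_range_iff,
    mem_rightIdealSpan_range_union_iff]
  constructor
  · rintro ⟨⟨p, hp⟩, q, hq⟩
    refine ⟨emb K n ∘ p, emb K n ∘ q, ?_⟩
    have split : emb K n h = t * emb K n h + (1 - t) * emb K n h := by noncomm_ring
    rw [split]
    congr 1
    · simp [hp, Finset.mul_sum, mul_assoc]
    · simp [hq, Finset.mul_sum, mul_assoc]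
  · rintro ⟨p, q, hpq⟩
    refine ⟨⟨specializeTag K n 1 ∘ p, ?_⟩, ⟨specializeTag K n 0 ∘ q, ?_⟩⟩
    · simpa [t, map_sum] using congrArg (specializeTag K n 1) hpq
    · simpa [t, map_sum] using congrArg (specializeTag K n 0) hpq
end

section
/- Let K be a field and X = {x₁,…,xₙ}. Let I = (f₁,…,f_r) and J = (g₁,…,g_s) be finitely generated two-sided ideals of K⟨X⟩. Let t be a new indeterminate, ι: K⟨X⟩ → K⟨X ∪ {t}⟩ the canonical embedding, and let H be the two-sided ideal of K⟨X ∪ {t}⟩ generated by {t·ι(fᵢ) : 1 ≤ i ≤ r} ∪ {(1 − t)·ι(gⱼ) : 1 ≤ j ≤ s} ∪ {t·ι(x_k) − ι(x_k)·t : 1 ≤ k ≤ n}. Then for every h ∈ K⟨X⟩: h ∈ I ∩ J if and only if ι(h) ∈ H. -/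
open scoped BigOperators

/-- The two-sided ideal generated by a set `S`, i.e. the set of finite sums
`∑ pᵢ * fᵢ * qᵢ` with `fᵢ ∈ S` and `pᵢ, qᵢ` arbitrary ring elements. -/
def idealSpan {A : Type*} [Semiring A] (S : Set A) : Set A :=
  {x | ∃ (d : ℕ) (p f q : Fin d → A), (∀ i, f i ∈ S) ∧ x = ∑ i, p i * f i * q i}

/-!
Write `t` for the tag variable and `H` for the ideal it generates. Modulo `H`, `t` commutes with
every `ι(u)`, so `{u | t·ι(u) ∈ H}` is a two-sided ideal of `K⟨X⟩`; it contains the `fᵢ`, hence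
all of `I`. Likewise `(1 − t)·ι(J) ⊆ H`, and for `h ∈ I ∩ J` we get
`ι(h) = t·ι(h) + (1 − t)·ι(h) ∈ H`. Conversely, the retractions `K⟨X ∪ {t}⟩ → K⟨X⟩` sending `t`
to `1` and to `0` map `H` into `I` and into `J` respectively, and fix `ι(h)`.
-/

section idealSpan

variable {A : Type*} [Ring A] {S : Set A}

lemma zero_mem_idealSpan : (0 : A) ∈ idealSpan S :=
  ⟨0, Fin.elim0, Fin.elim0, Fin.elim0, fun i => i.elim0, by simp⟩

lemma mul_mul_mem_idealSpan (p : A) {a : A} (q : A) (ha : a ∈ S) : p * a * q ∈ idealSpan S :=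
  ⟨1, fun _ => p, fun _ => a, fun _ => q, fun _ => ha, by simp⟩

lemma add_mem_idealSpan {x y : A} (hx : x ∈ idealSpan S) (hy : y ∈ idealSpan S) :
    x + y ∈ idealSpan S := by
  obtain ⟨d₁, p₁, f₁, q₁, hf₁, rfl⟩ := hx
  obtain ⟨d₂, p₂, f₂, q₂, hf₂, rfl⟩ := hy
  refine ⟨d₁ + d₂, Fin.addCases p₁ p₂, Fin.addCases f₁ f₂, Fin.addCases q₁ q₂,
    Fin.addCases (by simpa using hf₁) (by simpa using hf₂), ?_⟩
  simp [Fin.sum_univ_add]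

lemma neg_mem_idealSpan {x : A} (hx : x ∈ idealSpan S) : -x ∈ idealSpan S := by
  obtain ⟨d, p, f, q, hf, rfl⟩ := hx
  exact ⟨d, fun i => -p i, f, q, hf, by simp [Finset.sum_neg_distrib]⟩

lemma idealSpan_eq_span (S : Set A) : idealSpan S = (TwoSidedIdeal.span S : Set A) := by
  ext z
  constructor
  · rintro ⟨d, p, f, q, hf, rfl⟩
    exact TwoSidedIdeal.finsetSum_mem _ _ _ fun i _ =>
      TwoSidedIdeal.mul_mem_right _ _ _
        (TwoSidedIdeal.mul_mem_left _ _ _ (TwoSidedIdeal.subset_span (hf i)))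
  · intro hz
    rw [SetLike.mem_coe, TwoSidedIdeal.mem_span_iff_mem_addSubgroup_closure] at hz
    refine AddSubgroup.closure_induction ?_ zero_mem_idealSpan
      (fun _ _ _ _ => add_mem_idealSpan) (fun _ _ => neg_mem_idealSpan) hz
    rintro - ⟨-, ⟨p, -, a, ha, rfl⟩, q, -, rfl⟩
    exact mul_mul_mem_idealSpan p q ha

end idealSpan

namespace TwoSidedIdeal

variable {A B F : Type*} [Ring A] [Ring B] [FunLike F A B] [RingHomClass F A B]

lemma map_mem_of_mem_span (φ : F) {S : Set A} {J : TwoSidedIdeal B}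
    (hS : ∀ s ∈ S, φ s ∈ J) {a : A} (ha : a ∈ span S) : φ a ∈ J :=
  (mem_comap φ).mp (span_le.mpr (fun s hs => (mem_comap φ).mpr (hS s hs)) ha)

lemma mul_map_mem_of_mem_span (φ : F) (H : TwoSidedIdeal B) {t : B}
    (ht : ∀ a, t * φ a - φ a * t ∈ H) {S : Set A} (hS : ∀ s ∈ S, t * φ s ∈ H)
    {a : A} (ha : a ∈ span S) : t * φ a ∈ H := by
  induction ha using span_induction with
  | mem s hs => exact hS s hs
  | zero => simp
  | add x y _ _ hx hy => simpa [mul_add] using H.add_mem hx hy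
  | neg x _ hx => simpa using H.neg_mem hx
  | left_absorb b x _ hx =>
    have key : t * φ (b * x) = (t * φ b - φ b * t) * φ x + φ b * (t * φ x) := by
      rw [map_mul]; noncomm_ring
    rw [key]
    exact H.add_mem (H.mul_mem_right _ _ (ht b)) (H.mul_mem_left _ _ hx)
  | right_absorb b x _ hx => simpa [mul_assoc] using H.mul_mem_right _ (φ b) hx

end TwoSidedIdeal

lemma FreeAlgebra.mul_sub_mul_mem_of_forall_ι {R X B : Type*} [CommRing R] [Ring B]
    [Algebra R B] (φ : FreeAlgebra R X →ₐ[R] B) (H : TwoSidedIdeal B) {t : B}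
    (hι : ∀ x, t * φ (ι R x) - φ (ι R x) * t ∈ H) (u : FreeAlgebra R X) :
    t * φ u - φ u * t ∈ H := by
  induction u with
  | grade0 c => simp [Algebra.commutes]
  | grade1 x => exact hι x
  | mul a b ha hb =>
    have key : t * φ (a * b) - φ (a * b) * t =
        (t * φ a - φ a * t) * φ b + φ a * (t * φ b - φ b * t) := by
      rw [map_mul]; noncomm_ring
    rw [key]
    exact H.add_mem (H.mul_mem_right _ _ ha) (H.mul_mem_left _ _ hb)
  | add a b ha hb =>
    have key : t * φ (a + b) - φ (a + b) * t = (t * φ a - φ a * t) + (t * φ b - φ b * t) := by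
      rw [map_add]; noncomm_ring
    rw [key]
    exact H.add_mem ha hb

noncomputable def specializeLast (R : Type*) [CommRing R] (n : ℕ) (c : FreeAlgebra R (Fin n)) :
    FreeAlgebra R (Fin (n + 1)) →ₐ[R] FreeAlgebra R (Fin n) :=
  FreeAlgebra.lift R (Fin.lastCases c (FreeAlgebra.ι R))

section specializeLast

variable {R : Type*} [CommRing R] {n : ℕ} (c : FreeAlgebra R (Fin n))

@[simp] lemma specializeLast_ι_last :
    specializeLast R n c (FreeAlgebra.ι R (Fin.last n)) = c := by
  simp [specializeLast]

@[simp] lemma specializeLast_ι_castSucc (k : Fin n) :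
    specializeLast R n c (FreeAlgebra.ι R k.castSucc) = FreeAlgebra.ι R k := by
  simp [specializeLast]

end specializeLast

@[simp] lemma specializeLast_emb {K : Type*} [Field K] {n : ℕ} (c u : FreeAlgebra K (Fin n)) :
    specializeLast K n c (emb K n u) = u := by
  have : (specializeLast K n c).comp (emb K n) = AlgHom.id K _ := by ext; simp [emb]
  exact AlgHom.congr_fun this u

/-- **Intersection of two finitely generated two-sided ideals via a central tag variable.**
With `I = (f₁,…,f_r)`, `J = (g₁,…,g_s) ⊆ K⟨X⟩`, `t` the extra indeterminate of
`K⟨X ∪ {t}⟩` and `H = (t·ι(fᵢ), (1−t)·ι(gⱼ), t·ι(x_k) − ι(x_k)·t)`, for every `h ∈ K⟨X⟩`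
we have `h ∈ I ∩ J ↔ ι(h) ∈ H`. -/
theorem ideal_intersection_tag (K : Type*) [Field K] (n r s : ℕ)
    (f : Fin r → FreeAlgebra K (Fin n)) (g : Fin s → FreeAlgebra K (Fin n))
    (h : FreeAlgebra K (Fin n)) :
    h ∈ idealSpan (Set.range f) ∩ idealSpan (Set.range g) ↔
      emb K n h ∈ idealSpan
        ((Set.range fun i => FreeAlgebra.ι K (Fin.last n) * emb K n (f i)) ∪
          (Set.range fun j => (1 - FreeAlgebra.ι K (Fin.last n)) * emb K n (g j)) ∪
          (Set.range fun k : Fin n =>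
            FreeAlgebra.ι K (Fin.last n) * FreeAlgebra.ι K k.castSucc -
              FreeAlgebra.ι K k.castSucc * FreeAlgebra.ι K (Fin.last n))) := by
  simp only [idealSpan_eq_span, Set.mem_inter_iff, SetLike.mem_coe]
  set t : FreeAlgebra K (Fin (n + 1)) := FreeAlgebra.ι K (Fin.last n)
  set H := TwoSidedIdeal.span (((Set.range fun i => t * emb K n (f i)) ∪
    (Set.range fun j => (1 - t) * emb K n (g j))) ∪ (Set.range fun k : Fin n =>
      t * FreeAlgebra.ι K k.castSucc - FreeAlgebra.ι K k.castSucc * t))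
  have hcomm : ∀ u, t * emb K n u - emb K n u * t ∈ H :=
    FreeAlgebra.mul_sub_mul_mem_of_forall_ι _ H fun k =>
      TwoSidedIdeal.subset_span (Or.inr ⟨k, by simp [t, emb]⟩)
  have hcomm' : ∀ u, (1 - t) * emb K n u - emb K n u * (1 - t) ∈ H := fun u => by
    simpa [mul_sub, sub_mul] using H.neg_mem (hcomm u)
  constructor
  · rintro ⟨hI, hJ⟩
    rw [show emb K n h = t * emb K n h + (1 - t) * emb K n h by noncomm_ring]
    refine H.add_mem (TwoSidedIdeal.mul_map_mem_of_mem_span _ H hcomm ?_ hI)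
      (TwoSidedIdeal.mul_map_mem_of_mem_span _ H hcomm' ?_ hJ)
    · rintro _ ⟨i, rfl⟩; exact TwoSidedIdeal.subset_span (Or.inl (Or.inl ⟨i, rfl⟩))
    · rintro _ ⟨j, rfl⟩; exact TwoSidedIdeal.subset_span (Or.inl (Or.inr ⟨j, rfl⟩))
  · intro hH
    constructor
    · simpa using TwoSidedIdeal.map_mem_of_mem_span (specializeLast K n 1)
        (J := TwoSidedIdeal.span (Set.range f)) (by
          rintro _ ((⟨i, rfl⟩ | ⟨j, rfl⟩) | ⟨k, rfl⟩)
          · simpa [t] using TwoSidedIdeal.subset_span (Set.mem_range_self i)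
          all_goals simp [t]) hH
    · simpa using TwoSidedIdeal.map_mem_of_mem_span (specializeLast K n 0)
        (J := TwoSidedIdeal.span (Set.range g)) (by
          rintro _ ((⟨i, rfl⟩ | ⟨j, rfl⟩) | ⟨k, rfl⟩)
          · simp [t]
          · simpa [t] using TwoSidedIdeal.subset_span (Set.mem_range_self j)
          · simp [t]) hH
end

section
/- Let K be a field, X = {x₁,…,xₙ}, and let I_ρ be a right ideal of K⟨X⟩ with right generating set F. Let I_ρ^{φ̄} be the right ideal of the quotient algebra ℬ = K⟨X,T,T⁻¹⟩/J generated by {φ̄(f) : f ∈ F}. Then mon(I_ρ) = { f ∈ K⟨X⟩ : π(ι(f)) ∈ I_ρ^{φ̄} }, i.e., the monomial part of I_ρ consists exactly of those polynomials in K⟨X⟩ whose residue class modulo J lies in the extension I_ρ^{φ̄}. -/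
/-!
For `⊆`: in `ℬ`, `φ̄(w) = π(ι(w)) · t_w` with `t_w = t_{w₁} ⋯ t_{w_k}` (the `tⱼ` commute with
`X`), and `t_w` has the right inverse `t_{w_k}⁻¹ ⋯ t_{w₁}⁻¹`; so `π(ι(w)) ∈ φ̄(w) ℬ` for every
monomial `w`, and `φ̄` maps `I_ρ` into `I_ρ^{φ̄}`.

For `⊇`: `ℬ` maps to the monoid algebra `K[⟨X⟩ × F(T)]` (with `F(T)` the free group) by
`xᵢ ↦ (xᵢ, 1)`, `tⱼ^{±1} ↦ (1, tⱼ^{±1})`. A word `w` goes to `(w, 1)` under `π ∘ ι` and to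
`(w, τ w)` under `φ̄`, where `τ : ⟨X⟩ → F(T)`, `xᵢ ↦ tᵢ`, is injective. The `K`-linear map
`untag ν`, sending `(w, γ)` to `w` if `(τ w)⁻¹ γ = ν` and to `0` otherwise, satisfies
`untag ν (φ̄(p) r) = p · untag ν r`. Applying `untag (τ w)⁻¹` to `π(ι(f)) = ∑ φ̄(gᵢ) rᵢ` leaves
the term `c_w w` of `f` on the left and an element of `(F)_ρ` on the right.
-/

open scoped BigOperators

/-- The alphabet `X ∪ T ∪ T⁻¹` with `n` letters `xᵢ`, `n` letters `tᵢ` and `n` letters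
`tᵢ⁻¹` (one pair `tᵢ, tᵢ⁻¹` for each `xᵢ`). -/
abbrev XTTn (n : ℕ) := Fin n ⊕ (Fin n ⊕ Fin n)

/-- The relations generating the ideal `J ⊆ K⟨X,T,T⁻¹⟩`: the commutators
`xᵢt_j − t_jxᵢ` (`1 ≤ i,j ≤ n`) and `1 − t_j t_j⁻¹` (`1 ≤ j ≤ n`).  The quotient algebra
`ℬ = K⟨X,T,T⁻¹⟩/J` is `RingQuot (Brel K n)` and the quotient map `π` is
`RingQuot.mkAlgHom K (Brel K n)`. -/
inductive Brel (K : Type*) [Field K] (n : ℕ) :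
    FreeAlgebra K (XTTn n) → FreeAlgebra K (XTTn n) → Prop
  | comm (i j : Fin n) :
      Brel K n (FreeAlgebra.ι K (Sum.inl i) * FreeAlgebra.ι K (Sum.inr (Sum.inl j)))
        (FreeAlgebra.ι K (Sum.inr (Sum.inl j)) * FreeAlgebra.ι K (Sum.inl i))
  | inv (j : Fin n) :
      Brel K n
        (FreeAlgebra.ι K (Sum.inr (Sum.inl j)) * FreeAlgebra.ι K (Sum.inr (Sum.inr j))) 1

/-- The canonical embedding `ι : K⟨X⟩ → K⟨X,T,T⁻¹⟩`, `xᵢ ↦ xᵢ`. -/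
noncomputable def embB (K : Type*) [Field K] (n : ℕ) :
    FreeAlgebra K (Fin n) →ₐ[K] FreeAlgebra K (XTTn n) :=
  FreeAlgebra.lift K fun i => FreeAlgebra.ι K (Sum.inl i)

/-- The algebra homomorphism `φ : K⟨X⟩ → K⟨X,T,T⁻¹⟩`, `xᵢ ↦ xᵢtᵢ`. -/
noncomputable def phiB (K : Type*) [Field K] (n : ℕ) :
    FreeAlgebra K (Fin n) →ₐ[K] FreeAlgebra K (XTTn n) :=
  FreeAlgebra.lift K fun i =>
    FreeAlgebra.ι K (Sum.inl i) * FreeAlgebra.ι K (Sum.inr (Sum.inl i))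

/-- The monomial of `K⟨X⟩` corresponding to a word `w ∈ ⟨X⟩`. -/
noncomputable def monoW (K : Type*) [Field K] {n : ℕ} (w : FreeMonoid (Fin n)) :
    FreeAlgebra K (Fin n) :=
  ((FreeMonoid.toList w).map (FreeAlgebra.ι K)).prod

section RightIdealSpan

variable {A : Type*} [Semiring A] {S : Set A}

theorem subset_rightIdealSpan : S ⊆ rightIdealSpan S :=
  fun s hs => ⟨1, fun _ => s, fun _ => 1, fun _ => hs, by simp⟩

theorem rightIdealSpan.zero_mem : (0 : A) ∈ rightIdealSpan S :=
  ⟨0, Fin.elim0, Fin.elim0, fun i => i.elim0, by simp⟩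

theorem rightIdealSpan.add_mem {x y : A} (hx : x ∈ rightIdealSpan S)
    (hy : y ∈ rightIdealSpan S) : x + y ∈ rightIdealSpan S := by
  obtain ⟨d₁, f₁, q₁, hf₁, rfl⟩ := hx
  obtain ⟨d₂, f₂, q₂, hf₂, rfl⟩ := hy
  refine ⟨d₁ + d₂, Fin.append f₁ f₂, Fin.append q₁ q₂,
    Fin.addCases (by simpa using hf₁) (by simpa using hf₂), ?_⟩
  simp [Fin.sum_univ_add]

theorem rightIdealSpan.sum_mem {ι : Type*} (s : Finset ι) {x : ι → A}
    (h : ∀ i ∈ s, x i ∈ rightIdealSpan S) : ∑ i ∈ s, x i ∈ rightIdealSpan S :=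
  Finset.sum_induction x (· ∈ rightIdealSpan S) (fun _ _ => add_mem) zero_mem h

theorem rightIdealSpan.mul_mem {x : A} (hx : x ∈ rightIdealSpan S) (r : A) :
    x * r ∈ rightIdealSpan S := by
  obtain ⟨d, f, q, hf, rfl⟩ := hx
  exact ⟨d, f, fun i => q i * r, hf, by simp [Finset.sum_mul, mul_assoc]⟩

theorem rightIdealSpan.smul_mem {R : Type*} [CommSemiring R] [Algebra R A] {x : A}
    (c : R) (hx : x ∈ rightIdealSpan S) : c • x ∈ rightIdealSpan S := by
  rw [Algebra.smul_def, Algebra.commutes]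
  exact mul_mem hx _

theorem rightIdealSpan.map_mem {B G : Type*} [Semiring B] [FunLike G A B] [RingHomClass G A B]
    (g : G) {T : Set B} (hS : ∀ s ∈ S, g s ∈ rightIdealSpan T) {x : A}
    (hx : x ∈ rightIdealSpan S) : g x ∈ rightIdealSpan T := by
  obtain ⟨d, f, q, hf, rfl⟩ := hx
  rw [map_sum]
  exact sum_mem _ fun i _ => by rw [map_mul]; exact mul_mem (hS _ (hf i)) _

end RightIdealSpan

namespace FreeMonoid

variable {α : Type*}

def toFreeGroup : FreeMonoid α →* FreeGroup α :=
  FreeMonoid.lift FreeGroup.of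

theorem toWord_toFreeGroup [DecidableEq α] (w : FreeMonoid α) :
    (toFreeGroup w).toWord = w.toList.map (·, true) := by
  have hmk : toFreeGroup w = FreeGroup.mk (w.toList.map (·, true)) := by
    induction w using FreeMonoid.inductionOn' with
    | one => rfl
    | of_mul x w ih =>
      rw [map_mul, ih, toFreeGroup, lift_eval_of, FreeGroup.of, FreeGroup.mul_mk]
      rfl
  rw [hmk, FreeGroup.toWord_mk, FreeGroup.IsReduced.reduce_eq]
  simpa [FreeGroup.IsReduced, List.isChain_map] using
    List.isChain_iff_getElem.mpr fun _ _ => trivial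

theorem toFreeGroup_injective : Function.Injective (toFreeGroup (α := α)) := fun w w' h => by
  classical
  have := congrArg FreeGroup.toWord h
  rw [toWord_toFreeGroup, toWord_toFreeGroup] at this
  exact toList.injective (List.map_injective_iff.mpr (fun _ _ h => congrArg Prod.fst h) this)

end FreeMonoid

open FreeAlgebra MonoidAlgebra FreeMonoid

section MonomialPart

variable {K : Type*} [Field K] {n : ℕ}

theorem monoW_eq_lift (w : FreeMonoid (Fin n)) : monoW K w = FreeMonoid.lift (ι K) w :=
  (FreeMonoid.lift_apply _ _).symm

theorem monoW_mul (w v : FreeMonoid (Fin n)) : monoW K (w * v) = monoW K w * monoW K v := by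
  simp only [monoW_eq_lift, map_mul]

theorem monoW_of (x : Fin n) : monoW K (FreeMonoid.of x) = ι K x := by
  simp [monoW_eq_lift]

theorem basisFreeMonoid_eq_monoW (w : FreeMonoid (Fin n)) :
    basisFreeMonoid K (Fin n) w = monoW K w := by
  simp [basisFreeMonoid, equivMonoidAlgebraFreeMonoid, monoW_eq_lift]

theorem embB_ι (x : Fin n) : embB K n (ι K x) = ι K (.inl x) :=
  lift_ι_apply _ _

theorem phiB_ι (x : Fin n) : phiB K n (ι K x) = ι K (.inl x) * ι K (.inr (.inl x)) :=
  lift_ι_apply _ _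

local notation "π" => RingQuot.mkAlgHom K (Brel K n)

local notation "𝒯" => MonoidAlgebra K (FreeMonoid (Fin n) × FreeGroup (Fin n))

theorem commute_mk_t_embB (j : Fin n) (a : FreeAlgebra K (Fin n)) :
    Commute (π (ι K (.inr (.inl j)))) (π (embB K n a)) := by
  induction a using FreeAlgebra.induction with
  | grade0 r => simpa only [AlgHom.commutes] using Algebra.commute_algebraMap_right r _
  | grade1 x =>
    rw [embB_ι, Commute, SemiconjBy, ← map_mul, ← map_mul]
    exact (RingQuot.mkAlgHom_rel K (Brel.comm x j)).symm
  | mul a b ha hb => simpa only [map_mul] using ha.mul_right hb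
  | add a b ha hb => simpa only [map_add] using ha.add_right hb

variable (K n) in
noncomputable def tWord : FreeMonoid (Fin n) →* RingQuot (Brel K n) :=
  FreeMonoid.lift fun j => π (ι K (.inr (.inl j)))

theorem mk_phiB_monoW (w : FreeMonoid (Fin n)) :
    π (phiB K n (monoW K w)) = π (embB K n (monoW K w)) * tWord K n w := by
  induction w using FreeMonoid.inductionOn' with
  | one => simp [monoW_eq_lift]
  | of_mul x w ih =>
    rw [monoW_mul, map_mul, map_mul, ih, map_mul, map_mul, map_mul, tWord, lift_eval_of, ← tWord,
      monoW_of, phiB_ι, embB_ι, map_mul, mul_assoc, mul_assoc, (commute_mk_t_embB x _).left_comm]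

variable (K) in
theorem exists_tWord_mul_eq_one (w : FreeMonoid (Fin n)) : ∃ s, tWord K n w * s = 1 := by
  induction w using FreeMonoid.inductionOn' with
  | one => exact ⟨1, by simp⟩
  | of_mul x w ih =>
    obtain ⟨s, hs⟩ := ih
    refine ⟨s * π (ι K (.inr (.inr x))), ?_⟩
    rw [map_mul, tWord, lift_eval_of, ← tWord, mul_assoc, ← mul_assoc (tWord K n w), hs, one_mul,
      ← map_mul, RingQuot.mkAlgHom_rel K (Brel.inv x), map_one]

variable (K) in
theorem exists_mk_embB_monoW_eq_mul (w : FreeMonoid (Fin n)) :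
    ∃ s, π (embB K n (monoW K w)) = π (phiB K n (monoW K w)) * s := by
  obtain ⟨s, hs⟩ := exists_tWord_mul_eq_one K w
  exact ⟨s, by rw [mk_phiB_monoW, mul_assoc, hs, mul_one]⟩

theorem monomialPart_subset_contraction (F : Set (FreeAlgebra K (Fin n))) :
    rightIdealSpan {m | (∃ w : FreeMonoid (Fin n), m = monoW K w) ∧ m ∈ rightIdealSpan F} ⊆
      {f | π (embB K n f) ∈ rightIdealSpan ((fun g => π (phiB K n g)) '' F)} := by
  refine fun f hf => rightIdealSpan.map_mem ((π).comp (embB K n)) ?_ hf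
  rintro _ ⟨⟨w, rfl⟩, hw⟩
  obtain ⟨s, hs⟩ := exists_mk_embB_monoW_eq_mul K w
  rw [AlgHom.comp_apply, hs]
  refine rightIdealSpan.mul_mem (rightIdealSpan.map_mem ((π).comp (phiB K n)) ?_ hw) s
  exact fun g hg => subset_rightIdealSpan ⟨g, hg, rfl⟩

variable (K n) in
noncomputable def evalTagged : RingQuot (Brel K n) →ₐ[K] 𝒯 :=
  RingQuot.liftAlgHom K ⟨FreeAlgebra.lift K <| Sum.elim (fun i => of K _ (FreeMonoid.of i, 1))
    (Sum.elim (fun j => of K _ (1, FreeGroup.of j)) fun j => of K _ (1, (FreeGroup.of j)⁻¹)), by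
    rintro _ _ (_ | _) <;>
      simp only [map_mul, map_one, lift_ι_apply, Sum.elim_inl, Sum.elim_inr, ← (of K _).map_mul,
        Prod.mk_mul_mk, mul_one, one_mul, mul_inv_cancel, Prod.mk_one_one]⟩

variable (K) in
theorem evalTagged_embB_monoW (w : FreeMonoid (Fin n)) :
    evalTagged K n (π (embB K n (monoW K w))) = of K _ (w, 1) := by
  rw [monoW_eq_lift]
  exact DFunLike.congr_fun (f := ((evalTagged K n).toMonoidHom.comp
      ((π).comp (embB K n)).toMonoidHom).comp (FreeMonoid.lift (ι K)))
    (g := (of K _).comp (MonoidHom.inl _ _))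
    (FreeMonoid.hom_eq fun x => by simp [evalTagged, embB_ι]) w

variable (K) in
theorem evalTagged_phiB_monoW (w : FreeMonoid (Fin n)) :
    evalTagged K n (π (phiB K n (monoW K w))) = of K _ (w, toFreeGroup w) := by
  rw [monoW_eq_lift]
  exact DFunLike.congr_fun (f := ((evalTagged K n).toMonoidHom.comp
      ((π).comp (phiB K n)).toMonoidHom).comp (FreeMonoid.lift (ι K)))
    (g := (of K _).comp ((MonoidHom.id _).prod toFreeGroup))
    (FreeMonoid.hom_eq fun x => by simp [evalTagged, phiB_ι, toFreeGroup]) w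

variable (K n) in
noncomputable def untag (ν : FreeGroup (Fin n)) : 𝒯 →ₗ[K] FreeAlgebra K (Fin n) :=
  Finsupp.linearCombination K (fun p : FreeMonoid (Fin n) × FreeGroup (Fin n) =>
      if (toFreeGroup p.1)⁻¹ * p.2 = ν then monoW K p.1 else 0) ∘ₗ
    (coeffLinearEquiv K).toLinearMap

theorem untag_single (ν : FreeGroup (Fin n)) (p : FreeMonoid (Fin n) × FreeGroup (Fin n))
    (c : K) :
    untag K n ν (single p c) = c • if (toFreeGroup p.1)⁻¹ * p.2 = ν then monoW K p.1 else 0 := by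
  simp [untag]

theorem untag_of_mul (ν : FreeGroup (Fin n)) (w : FreeMonoid (Fin n)) (r : 𝒯) :
    untag K n ν (of K _ (w, toFreeGroup w) * r) = monoW K w * untag K n ν r := by
  induction r using MonoidAlgebra.induction_linear with
  | zero => simp
  | add r s hr hs => rw [mul_add, map_add, hr, hs, map_add, mul_add]
  | single p c =>
    rw [of_apply, single_mul_single, one_mul, untag_single, untag_single, mul_smul_comm,
      Prod.fst_mul, Prod.snd_mul, map_mul, mul_inv_rev, mul_assoc, inv_mul_cancel_left]
    split_ifs <;> simp [monoW_mul]

theorem untag_evalTagged_phiB_mul (ν : FreeGroup (Fin n)) (p : FreeAlgebra K (Fin n)) (r : 𝒯) :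
    untag K n ν (evalTagged K n (π (phiB K n p)) * r) = p * untag K n ν r := by
  have key : untag K n ν ∘ₗ LinearMap.mulRight K r ∘ₗ
      ((evalTagged K n).comp ((π).comp (phiB K n))).toLinearMap =
      LinearMap.mulRight K (untag K n ν r) :=
    (basisFreeMonoid K (Fin n)).ext fun w => by
      simp only [LinearMap.comp_apply, AlgHom.toLinearMap_apply, AlgHom.comp_apply,
        LinearMap.mulRight_apply, basisFreeMonoid_eq_monoW, evalTagged_phiB_monoW, untag_of_mul]
  exact congr($key p)

theorem untag_evalTagged_embB (f : FreeAlgebra K (Fin n)) (w : FreeMonoid (Fin n)) :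
    untag K n (toFreeGroup w)⁻¹ (evalTagged K n (π (embB K n f))) =
      (basisFreeMonoid K (Fin n)).repr f w • monoW K w := by
  have key : untag K n (toFreeGroup w)⁻¹ ∘ₗ
      ((evalTagged K n).comp ((π).comp (embB K n))).toLinearMap =
      ((basisFreeMonoid K (Fin n)).coord w).smulRight (monoW K w) :=
    (basisFreeMonoid K (Fin n)).ext fun v => by
      simp only [LinearMap.comp_apply, AlgHom.toLinearMap_apply, AlgHom.comp_apply,
        LinearMap.smulRight_apply, Module.Basis.coord_apply, Module.Basis.repr_self]
      rw [basisFreeMonoid_eq_monoW, evalTagged_embB_monoW, of_apply, untag_single]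
      rcases eq_or_ne v w with rfl | h
      · simp
      · simp [h, h.symm, toFreeGroup_injective.eq_iff]
  exact congr($key f)

theorem monoW_mem_of_repr_ne_zero {F : Set (FreeAlgebra K (Fin n))} {f : FreeAlgebra K (Fin n)}
    (hf : π (embB K n f) ∈ rightIdealSpan ((fun g => π (phiB K n g)) '' F))
    {w : FreeMonoid (Fin n)} (hw : (basisFreeMonoid K (Fin n)).repr f w ≠ 0) :
    monoW K w ∈ rightIdealSpan F := by
  obtain ⟨d, gB, q, hgB, hf⟩ := hf
  choose g hgF hg using hgB
  have hcoeff : (basisFreeMonoid K (Fin n)).repr f w • monoW K w =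
      ∑ i, g i * untag K n (toFreeGroup w)⁻¹ (evalTagged K n (q i)) := by
    rw [← untag_evalTagged_embB, hf, map_sum, map_sum]
    simp only [map_mul, ← hg, untag_evalTagged_phiB_mul]
  rw [← inv_smul_smul₀ hw (monoW K w), hcoeff]
  exact rightIdealSpan.smul_mem _ ⟨d, g, _, hgF, rfl⟩

theorem contraction_subset_monomialPart (F : Set (FreeAlgebra K (Fin n))) :
    {f | π (embB K n f) ∈ rightIdealSpan ((fun g => π (phiB K n g)) '' F)} ⊆
      rightIdealSpan {m | (∃ w : FreeMonoid (Fin n), m = monoW K w) ∧ m ∈ rightIdealSpan F} := by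
  intro f hf
  rw [← (basisFreeMonoid K (Fin n)).linearCombination_repr f, Finsupp.linearCombination_apply]
  refine rightIdealSpan.sum_mem _ fun w hw => rightIdealSpan.smul_mem _ ?_
  rw [basisFreeMonoid_eq_monoW]
  exact subset_rightIdealSpan
    ⟨⟨w, rfl⟩, monoW_mem_of_repr_ne_zero hf (Finsupp.mem_support_iff.mp hw)⟩

end MonomialPart

/-- **The monomial part of a right ideal via the extension along `φ̄`.**
Let `I_ρ` be the right ideal of `K⟨X⟩` generated by `F`, and let `I_ρ^{φ̄}` be the right
ideal of `ℬ = K⟨X,T,T⁻¹⟩/J` generated by `{φ̄(f) : f ∈ F}`.  Then `mon(I_ρ)`, the right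
ideal generated by all monomials contained in `I_ρ`, equals
`{ f ∈ K⟨X⟩ : π(ι(f)) ∈ I_ρ^{φ̄} }`. -/
theorem monomialPart_eq_contraction (K : Type*) [Field K] (n : ℕ)
    (F : Set (FreeAlgebra K (Fin n))) :
    rightIdealSpan {m | (∃ w : FreeMonoid (Fin n), m = monoW K w) ∧ m ∈ rightIdealSpan F} =
      {f | RingQuot.mkAlgHom K (Brel K n) (embB K n f) ∈
        rightIdealSpan ((fun g => RingQuot.mkAlgHom K (Brel K n) (phiB K n g)) '' F)} :=
  (monomialPart_subset_contraction F).antisymm (contraction_subset_monomialPart F)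
end

section
/- Let K be a field and X = {x₁,…,xₙ}, and let ⪯ be a monomial ordering on ⟨X⟩. Let I_ρ be a right ideal of K⟨X⟩ with a right generating set G that is right reduced, i.e., every g ∈ G is monic and, for every g ∈ G, no monomial in supp(g) is a right multiple lm(g')·b (b ∈ ⟨X⟩) of lm(g') for any g' ∈ G \ {g}. Then G is a right Gröbner basis of I_ρ: for every nonzero f ∈ I_ρ there exist g ∈ G and b ∈ ⟨X⟩ with lm(f) = lm(g)·b. -/
open scoped BigOperators

/-- The leading monomial of `f ∈ K⟨X⟩` with respect to a linear order `ord` on the free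
monoid of monomials: the `ord`-largest element of the support of `f` (and `1` if `f = 0`).
Here `K⟨X⟩` is realized as the monoid algebra of the free monoid `⟨X⟩`, so that monomials
form its canonical basis. -/
noncomputable def lm {K : Type*} [Field K] {n : ℕ} (ord : LinearOrder (FreeMonoid (Fin n)))
    (f : MonoidAlgebra K (FreeMonoid (Fin n))) : FreeMonoid (Fin n) :=
  if h : f.coeff.support.Nonempty then @Finset.max' _ ord f.coeff.support h else 1

/-
Write `f = ∑_{g ∈ S} g * Q_g` with distinct `g ∈ G` and pick `g₀ ∈ S`, `m₀ ∈ supp(Q_{g₀})` with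
`M = lm(g₀) * m₀` maximal. Every monomial of `f` is at most `M`. A factorisation `u * m = M` with
`u ∈ supp(g)`, `m ∈ supp(Q_g)` forces `lm(g) * m = M`, so `lm(g)` and `lm(g₀)` are prefixes of one
word and one is a right multiple of the other; right reducedness gives `g = g₀`, and cancellation
`u = lm(g₀)`, `m = m₀`. Hence the coefficient of `M` in `f` is `lc(g₀) * Q_{g₀}(m₀) ≠ 0`, and
`lm(f) = M`.
-/

theorem FreeMonoid.exists_eq_mul_or_exists_eq_mul_of_mul_eq_mul {α : Type*}
    {a b c d : FreeMonoid α} (h : a * b = c * d) : (∃ e, c = a * e) ∨ ∃ e, a = c * e := by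
  rcases List.append_eq_append_iff.mp (congrArg FreeMonoid.toList h) with ⟨e, he, _⟩ | ⟨e, he, _⟩
  · exact Or.inl ⟨FreeMonoid.ofList e, congrArg FreeMonoid.ofList he⟩
  · exact Or.inr ⟨FreeMonoid.ofList e, congrArg FreeMonoid.ofList he⟩

theorem exists_finset_sum_mul_eq_of_mem_rightIdealSpan {A : Type*} [Semiring A] {S : Set A}
    {x : A} (hx : x ∈ rightIdealSpan S) :
    ∃ (T : Finset A) (Q : A → A), ↑T ⊆ S ∧ x = ∑ g ∈ T, g * Q g := by
  classical
  obtain ⟨d, F, q, hF, rfl⟩ := hx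
  refine ⟨Finset.univ.image F, fun g ↦ ∑ i with F i = g, q i, ?_, ?_⟩
  · simpa [Set.range_subset_iff] using hF
  · rw [← Finset.sum_fiberwise_of_maps_to
      (fun i _ ↦ Finset.mem_image_of_mem F (Finset.mem_univ i))]
    refine Finset.sum_congr rfl fun g _ ↦ ?_
    rw [Finset.mul_sum]
    exact Finset.sum_congr rfl fun i hi ↦ by rw [(Finset.mem_filter.mp hi).2]

section LeadingMonomial

variable {K : Type*} [Field K] {n : ℕ} (ord : LinearOrder (FreeMonoid (Fin n)))
  {f : MonoidAlgebra K (FreeMonoid (Fin n))}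

theorem lm_mem_support (hf : f ≠ 0) : lm ord f ∈ f.coeff.support := by
  have h : f.coeff.support.Nonempty :=
    Finsupp.support_nonempty_iff.mpr (MonoidAlgebra.coeff_eq_zero.not.mpr hf)
  rw [lm, dif_pos h]
  exact Finset.max'_mem _ h

theorem le_lm {u : FreeMonoid (Fin n)} (hu : u ∈ f.coeff.support) : ord.le u (lm ord f) := by
  rw [lm, dif_pos ⟨u, hu⟩]
  exact Finset.le_max' _ u hu

theorem lm_eq_of_forall_le {M : FreeMonoid (Fin n)} (hM : M ∈ f.coeff.support)
    (h : ∀ v ∈ f.coeff.support, ord.le v M) : lm ord f = M := by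
  have hf : f ≠ 0 := by rintro rfl; simp at hM
  exact ord.le_antisymm _ _ (h _ (lm_mem_support ord hf)) (le_lm ord hM)

theorem eq_of_lm_mul_eq_lm_mul {G : Set (MonoidAlgebra K (FreeMonoid (Fin n)))}
    (hred : ∀ g ∈ G, ∀ m ∈ g.coeff.support,
      ¬∃ g' ∈ G, g' ≠ g ∧ ∃ b : FreeMonoid (Fin n), m = lm ord g' * b)
    {g g' : MonoidAlgebra K (FreeMonoid (Fin n))} (hg : g ∈ G) (hg' : g' ∈ G)
    (hg0 : g ≠ 0) (hg'0 : g' ≠ 0) {b b' : FreeMonoid (Fin n)}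
    (h : lm ord g * b = lm ord g' * b') : g = g' := by
  by_contra hne
  rcases FreeMonoid.exists_eq_mul_or_exists_eq_mul_of_mul_eq_mul h with ⟨e, he⟩ | ⟨e, he⟩
  · exact hred g' hg' _ (lm_mem_support ord hg'0) ⟨g, hg, hne, e, he⟩
  · exact hred g hg _ (lm_mem_support ord hg0) ⟨g', hg', Ne.symm hne, e, he⟩

variable {S : Finset (MonoidAlgebra K (FreeMonoid (Fin n)))}
  {Q : MonoidAlgebra K (FreeMonoid (Fin n)) → MonoidAlgebra K (FreeMonoid (Fin n))}
  {g₀ : MonoidAlgebra K (FreeMonoid (Fin n))} {m₀ : FreeMonoid (Fin n)}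

theorem eq_of_mul_eq_lm_mul_of_isMax
    (hcomp : ∀ b m m' : FreeMonoid (Fin n), ord.le m m' → ord.le (m * b) (m' * b))
    (hprefix : ∀ g ∈ S, ∀ g' ∈ S, ∀ b b' : FreeMonoid (Fin n),
      lm ord g * b = lm ord g' * b' → g = g')
    (hg₀ : g₀ ∈ S)
    (hmax : ∀ g ∈ S, ∀ m ∈ (Q g).coeff.support, ord.le (lm ord g * m) (lm ord g₀ * m₀))
    ⦃g : MonoidAlgebra K (FreeMonoid (Fin n))⦄ ⦃u m : FreeMonoid (Fin n)⦄ (hg : g ∈ S)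
    (hu : u ∈ g.coeff.support) (hm : m ∈ (Q g).coeff.support) (h : u * m = lm ord g₀ * m₀) :
    g = g₀ ∧ u = lm ord g₀ ∧ m = m₀ := by
  have hlm : lm ord g * m = lm ord g₀ * m₀ :=
    ord.le_antisymm _ _ (hmax g hg m hm) (h ▸ hcomp m _ _ (le_lm ord hu))
  obtain rfl := hprefix g hg g₀ hg₀ m m₀ hlm
  obtain rfl := mul_left_cancel hlm
  exact ⟨rfl, mul_right_cancel (h.trans hlm.symm), rfl⟩

theorem lm_sum_mul_eq_of_isMax
    (hcomp : ∀ b m m' : FreeMonoid (Fin n), ord.le m m' → ord.le (m * b) (m' * b))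
    (hS0 : ∀ g ∈ S, g ≠ 0)
    (hprefix : ∀ g ∈ S, ∀ g' ∈ S, ∀ b b' : FreeMonoid (Fin n),
      lm ord g * b = lm ord g' * b' → g = g')
    (hg₀ : g₀ ∈ S) (hm₀ : m₀ ∈ (Q g₀).coeff.support)
    (hmax : ∀ g ∈ S, ∀ m ∈ (Q g).coeff.support, ord.le (lm ord g * m) (lm ord g₀ * m₀)) :
    lm ord (∑ g ∈ S, g * Q g) = lm ord g₀ * m₀ := by
  classical
  have huniq := eq_of_mul_eq_lm_mul_of_isMax ord hcomp hprefix hg₀ hmax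
  have hcoeff : (∑ g ∈ S, g * Q g).coeff (lm ord g₀ * m₀) =
      g₀.coeff (lm ord g₀) * (Q g₀).coeff m₀ := by
    rw [MonoidAlgebra.coeff_sum, Finset.sum_apply', Finset.sum_eq_single g₀]
    · exact MonoidAlgebra.coeff_mul_mul_of_uniqueMul fun u m hu hm h ↦ (huniq hg₀ hu hm h).2
    · refine fun g hg hne ↦ Finsupp.notMem_support_iff.mp fun hM ↦ hne ?_
      obtain ⟨u, hu, m, hm, h⟩ := Finset.mem_mul.mp (MonoidAlgebra.support_coeff_mul_subset _ _ hM)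
      exact (huniq hg hu hm h).1
    · exact fun h ↦ absurd hg₀ h
  have hM : lm ord g₀ * m₀ ∈ (∑ g ∈ S, g * Q g).coeff.support := by
    rw [Finsupp.mem_support_iff, hcoeff]
    exact mul_ne_zero (Finsupp.mem_support_iff.mp (lm_mem_support ord (hS0 g₀ hg₀)))
      (Finsupp.mem_support_iff.mp hm₀)
  refine lm_eq_of_forall_le ord hM fun v hv ↦ ?_
  rw [MonoidAlgebra.coeff_sum] at hv
  obtain ⟨g, hg, hv⟩ := Finsupp.mem_support_finsetSum v hv
  obtain ⟨u, hu, m, hm, rfl⟩ := Finset.mem_mul.mp (MonoidAlgebra.support_coeff_mul_subset _ _ hv)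
  exact ord.le_trans _ _ _ (hcomp m _ _ (le_lm ord hu)) (hmax g hg m hm)

theorem exists_lm_sum_mul_eq_lm_mul
    (hcomp : ∀ b m m' : FreeMonoid (Fin n), ord.le m m' → ord.le (m * b) (m' * b))
    (hS0 : ∀ g ∈ S, g ≠ 0)
    (hprefix : ∀ g ∈ S, ∀ g' ∈ S, ∀ b b' : FreeMonoid (Fin n),
      lm ord g * b = lm ord g' * b' → g = g')
    (hf : ∑ g ∈ S, g * Q g ≠ 0) :
    ∃ g ∈ S, ∃ b : FreeMonoid (Fin n), lm ord (∑ g ∈ S, g * Q g) = lm ord g * b := by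
  let := ord
  set P := S.sigma fun g ↦ (Q g).coeff.support
  have hmemP : ∀ g m, ⟨g, m⟩ ∈ P ↔ g ∈ S ∧ m ∈ (Q g).coeff.support := fun _ _ ↦ Finset.mem_sigma
  have hPne : P.Nonempty := by
    obtain ⟨g, hg, hgQ⟩ := Finset.exists_ne_zero_of_sum_ne_zero hf
    obtain ⟨m, hm⟩ := Finsupp.support_nonempty_iff.mpr
      (MonoidAlgebra.coeff_eq_zero.not.mpr (right_ne_zero_of_mul hgQ))
    exact ⟨⟨g, m⟩, (hmemP g m).mpr ⟨hg, hm⟩⟩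
  obtain ⟨⟨g₀, m₀⟩, hp₀, hmax⟩ := P.exists_max_image (fun p ↦ lm ord p.1 * p.2) hPne
  obtain ⟨hg₀, hm₀⟩ := (hmemP g₀ m₀).mp hp₀
  exact ⟨g₀, hg₀, m₀, lm_sum_mul_eq_of_isMax ord hcomp hS0 hprefix hg₀ hm₀
    fun g hg m hm ↦ hmax ⟨g, m⟩ ((hmemP g m).mpr ⟨hg, hm⟩)⟩

end LeadingMonomial

theorem rightReduced_is_rightGroebnerBasis_general (K : Type*) [Field K] (n : ℕ)
    (ord : LinearOrder (FreeMonoid (Fin n)))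
    (hcomp : ∀ a b m m' : FreeMonoid (Fin n), ord.le m m' → ord.le (a * m * b) (a * m' * b))
    (G : Set (MonoidAlgebra K (FreeMonoid (Fin n))))
    (hmonic : ∀ g ∈ G, g.coeff (lm ord g) = 1)
    (hred : ∀ g ∈ G, ∀ m ∈ g.coeff.support,
      ¬∃ g' ∈ G, g' ≠ g ∧ ∃ b : FreeMonoid (Fin n), m = lm ord g' * b) :
    ∀ f ∈ rightIdealSpan G, f ≠ 0 →
      ∃ g ∈ G, ∃ b : FreeMonoid (Fin n), lm ord f = lm ord g * b := by
  intro f hf hne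
  obtain ⟨S, Q, hSG, rfl⟩ := exists_finset_sum_mul_eq_of_mem_rightIdealSpan hf
  have hG0 : ∀ g ∈ G, g ≠ 0 := fun g hg h0 ↦ by simpa [h0] using hmonic g hg
  obtain ⟨g, hg, b, hb⟩ := exists_lm_sum_mul_eq_lm_mul ord
    (fun b m m' h ↦ by simpa using hcomp 1 b m m' h) (fun g hg ↦ hG0 g (hSG hg))
    (fun g hg g' hg' _ _ h ↦ eq_of_lm_mul_eq_lm_mul ord hred (hSG hg) (hSG hg')
      (hG0 g (hSG hg)) (hG0 g' (hSG hg')) h) hne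
  exact ⟨g, hSG hg, b, hb⟩

/-- **Right reduced sets are right Gröbner bases** (Lemma on right Gröbner bases).
Let `⪯` be a monomial ordering on `⟨X⟩` (a linear order that is a well-order and compatible
with multiplication) and let `G` be a right generating set of the right ideal `I_ρ` that is
right reduced: every `g ∈ G` is monic and no monomial in the support of any `g ∈ G` is a
right multiple of `lm(g')` for some `g' ∈ G \ {g}`.  Then `G` is a right Gröbner basis of
`I_ρ`: the leading monomial of every nonzero `f ∈ I_ρ` is a right multiple of `lm(g)` for
some `g ∈ G`. -/
theorem rightReduced_is_rightGroebnerBasis (K : Type*) [Field K] (n : ℕ)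
    (ord : LinearOrder (FreeMonoid (Fin n)))
    (hwo : WellFounded ord.lt)
    (hcomp : ∀ a b m m' : FreeMonoid (Fin n), ord.le m m' → ord.le (a * m * b) (a * m' * b))
    (G : Set (MonoidAlgebra K (FreeMonoid (Fin n))))
    (hmonic : ∀ g ∈ G, g.coeff (lm ord g) = 1)
    (hred : ∀ g ∈ G, ∀ m ∈ g.coeff.support,
      ¬∃ g' ∈ G, g' ≠ g ∧ ∃ b : FreeMonoid (Fin n), m = lm ord g' * b) :
    ∀ f ∈ rightIdealSpan G, f ≠ 0 →
      ∃ g ∈ G, ∃ b : FreeMonoid (Fin n), lm ord f = lm ord g * b :=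
  rightReduced_is_rightGroebnerBasis_general K n ord hcomp G hmonic hred
end

section
/- Let R be a ring, (N,·) a monoid with identity 1, and (S_α)_{α∈N} a family of additive subgroups of R whose internal direct sum is R. Let S ⊆ R be such that every element of S lies in some S_α and no two distinct elements of S lie in the same S_α. Assume S_1·S_α ⊆ S_α for all α ∈ N, and let I_ρ be the right ideal of R generated by a subset of S_1. If r = c₁s₁ + ⋯ + c_d s_d ∈ I_ρ with s₁,…,s_d ∈ S pairwise distinct and c₁,…,c_d ∈ S_1, then c_i s_i ∈ I_ρ for every i = 1,…,d. -/
open scoped BigOperators DirectSum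

/-!
Project onto the degree of `sᵢ`. This projection kills every `cⱼsⱼ` with `j ≠ i`, because the
`sⱼ` have pairwise distinct degrees and multiplying by `cⱼ ∈ S_1` keeps the degree; and it
maps `I_ρ` into itself, because it commutes with left multiplication by the generators, which
lie in `S_1`.
-/

theorem map_mem_rightIdealSpan {A : Type*} [Semiring A] {F : Set A} (g : A →+ A)
    (hg : ∀ f ∈ F, ∀ q, g (f * q) = f * g q) {x : A} (hx : x ∈ rightIdealSpan F) :
    g x ∈ rightIdealSpan F := by
  obtain ⟨d, f, q, hf, rfl⟩ := hx
  refine ⟨d, f, fun i => g (q i), hf, ?_⟩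
  simp only [map_sum, hg _ (hf _)]

namespace DirectSum

variable {ι σ : Type*} [DecidableEq ι]

section AddCommMonoid

variable {M : Type*} [AddCommMonoid M] [SetLike σ M] [AddSubmonoidClass σ M]
  (ℳ : ι → σ) [Decomposition ℳ]

noncomputable def decomposeComponent (i : ι) : M →+ M :=
  (AddSubmonoidClass.subtype (ℳ i)).comp
    ((DFinsupp.evalAddMonoidHom i).comp (decomposeAddEquiv ℳ).toAddMonoidHom)

@[simp]
theorem decomposeComponent_apply (i : ι) (x : M) :
    decomposeComponent ℳ i x = decompose ℳ x i :=
  rfl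

variable {ℳ}

theorem decompose_sum_apply_of_injective {κ : Type*} [Fintype κ] {x : κ → M} {deg : κ → ι}
    (hdeg : Function.Injective deg) (hx : ∀ k, x k ∈ ℳ (deg k)) (k : κ) :
    (decompose ℳ (∑ l, x l) (deg k) : M) = x k := by
  rw [decompose_sum, DFinsupp.finsetSum_apply, AddSubmonoidClass.coe_finsetSum,
    Finset.sum_eq_single k]
  · exact decompose_of_mem_same ℳ (hx k)
  · exact fun l _ hlk => decompose_of_mem_ne ℳ (hx l) (hdeg.ne hlk)
  · exact fun hk => absurd (Finset.mem_univ k) hk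

end AddCommMonoid

theorem decompose_mul_apply_of_forall_mul_mem {R : Type*} [Semiring R] [SetLike σ R]
    [AddSubmonoidClass σ R] {ℳ : ι → σ} [Decomposition ℳ] {a : R}
    (ha : ∀ i, ∀ b ∈ ℳ i, a * b ∈ ℳ i) (x : R) (i : ι) :
    (decompose ℳ (a * x) i : R) = a * decompose ℳ x i := by
  induction x using Decomposition.inductionOn ℳ with
  | zero => simp
  | @homogeneous j b =>
    obtain ⟨b, hb⟩ := b
    by_cases hij : j = i
    · subst hij
      rw [decompose_of_mem_same ℳ hb, decompose_of_mem_same ℳ (ha j b hb)]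
    · rw [decompose_of_mem_ne ℳ hb hij, decompose_of_mem_ne ℳ (ha j b hb) hij, mul_zero]
  | add x y hx hy => simp only [mul_add, decompose_add, add_apply, AddMemClass.coe_add, hx, hy]

end DirectSum

open DirectSum in
/-- **Separating pseudogradings separate the terms of elements of s-homogeneous right
ideals.**  Let `R` be a ring, `(N,·)` a monoid and `(S_α)_{α∈N}` a family of additive
subgroups whose internal direct sum is `R`.  Let `Sset ⊆ R` be such that every element of
`Sset` lies in some `S_α` and no two distinct elements of `Sset` lie in the same `S_α`
(separating pseudograding), and assume `S_1 · S_α ⊆ S_α` for all `α`.  Let `I_ρ` be the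
right ideal generated by a subset `F ⊆ S_1`.  If `r = c₁s₁ + ⋯ + c_d s_d ∈ I_ρ` with the
`sᵢ ∈ Sset` pairwise distinct and the `cᵢ ∈ S_1`, then `cᵢsᵢ ∈ I_ρ` for every `i`. -/
theorem sHomogeneous_rightIdeal_separates {R : Type*} [Ring R] {N : Type*} [Monoid N]
    [DecidableEq N]
    (S : N → AddSubgroup R)
    (hinternal : DirectSum.IsInternal S)
    (Sset : Set R)
    (hmem : ∀ s ∈ Sset, ∃ α : N, s ∈ S α)
    (hsep : ∀ s ∈ Sset, ∀ s' ∈ Sset, ∀ α : N, s ∈ S α → s' ∈ S α → s = s')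
    (hmul : ∀ α : N, ∀ a ∈ S 1, ∀ b ∈ S α, a * b ∈ S α)
    (F : Set R) (hF : F ⊆ S 1)
    (d : ℕ) (c s : Fin d → R)
    (hs : ∀ i, s i ∈ Sset)
    (hdist : ∀ i j, i ≠ j → s i ≠ s j)
    (hc : ∀ i, c i ∈ S 1)
    (hr : (∑ i, c i * s i) ∈ rightIdealSpan F) :
    ∀ i, c i * s i ∈ rightIdealSpan F := by
  let _ : Decomposition S := hinternal.chooseDecomposition
  choose deg hdeg using fun i => hmem (s i) (hs i)
  have hdeg_inj : Function.Injective deg := fun i j hij => by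
    by_contra hne
    exact hdist i j hne (hsep _ (hs i) _ (hs j) (deg i) (hdeg i) (hij ▸ hdeg j))
  intro i
  rw [← decompose_sum_apply_of_injective hdeg_inj (fun j => hmul _ _ (hc j) _ (hdeg j)) i,
    ← decomposeComponent_apply]
  exact map_mem_rightIdealSpan _
    (fun f hf q => decompose_mul_apply_of_forall_mul_mem (hmul · f (hF hf)) q _) hr
end

section
/- For α ∈ F_n, let K⟨X,T,T⁻¹⟩_α be the K-linear span of the monomials m ∈ ⟨X,T,T⁻¹⟩ with sdeg(m) = α. Then: (i) K⟨X,T,T⁻¹⟩ is the internal direct sum of the additive subgroups K⟨X,T,T⁻¹⟩_α, α ∈ F_n; (ii) K⟨X,T,T⁻¹⟩_1 · K⟨X,T,T⁻¹⟩_α ⊆ K⟨X,T,T⁻¹⟩_α for all α ∈ F_n; (iii) sdeg is injective on the submonoid ⟨X⟩ of words in x₁,…,xₙ alone, so each subgroup K⟨X,T,T⁻¹⟩_α contains at most one monomial from ⟨X⟩. Hence these subgroups form a separating F_n-pseudograding for ⟨X⟩. -/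
/-! The fibres of any map `f : M → ι` split a monoid algebra `R[M]` into the internal direct sum
of the subspaces supported on them, which gives (i). Since
`sdeg (m₁ * m₂) = μ(m₂)⁻¹ * sdeg m₁ * μ(m₂) * sdeg m₂`, a left factor of degree `1` does not
change the degree, which gives (ii). On `⟨X⟩` the map `μ` is trivial, so `sdeg` is the canonical
map from the free monoid to the free group; it is injective because words without inverse
letters are reduced. This gives (iii), and (iv) follows since a monomial lies in `S α` exactly
when its degree is `α`. -/

open scoped DirectSum

/-- The monoid homomorphism `λ : ⟨X,T,T⁻¹⟩ → F_n` with `λ(xᵢ) = gᵢ`,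
`λ(t_j) = λ(t_j⁻¹) = 1`. -/
def lamHom (n : ℕ) : FreeMonoid (XTTn n) →* FreeGroup (Fin n) :=
  FreeMonoid.lift (Sum.elim (fun i => FreeGroup.of i) fun _ => 1)

/-- The monoid homomorphism `μ : ⟨X,T,T⁻¹⟩ → F_n` with `μ(xᵢ) = 1`, `μ(t_j) = g_j`,
`μ(t_j⁻¹) = g_j⁻¹`. -/
def muHom (n : ℕ) : FreeMonoid (XTTn n) →* FreeGroup (Fin n) :=
  FreeMonoid.lift (Sum.elim (fun _ => 1)
    (Sum.elim (fun j => FreeGroup.of j) fun j => (FreeGroup.of j)⁻¹))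

/-- `sdeg(m) = μ(m)⁻¹ · λ(m) ∈ F_n`. -/
def sdeg (n : ℕ) (m : FreeMonoid (XTTn n)) : FreeGroup (Fin n) :=
  (muHom n m)⁻¹ * lamHom n m

/-- A word of `⟨X,T,T⁻¹⟩` lies in the submonoid `⟨X⟩` if all its letters are among the
`xᵢ`. -/
def InX (n : ℕ) (m : FreeMonoid (XTTn n)) : Prop :=
  ∀ u ∈ FreeMonoid.toList m, ∃ i : Fin n, u = Sum.inl i

open scoped Pointwise

namespace MonoidAlgebra

variable {R M : Type*}

theorem span_of_image_eq_supported [CommSemiring R] [MulOneClass M] (s : Set M) :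
    Submodule.span R (of R M '' s) = supported R R s := by
  rw [supported_eq_span_single]; rfl

theorem of_mem_supported_iff [CommSemiring R] [Nontrivial R] [MulOneClass M] {m : M}
    {s : Set M} : of R M m ∈ supported R R s ↔ m ∈ s := by
  simp [mem_supported]

theorem mul_mem_supported [Semiring R] [Mul M] {s t u : Set M} (hst : s * t ⊆ u)
    {a b : R[M]} (ha : a ∈ supported R R s) (hb : b ∈ supported R R t) :
    a * b ∈ supported R R u := by
  classical
  rw [mem_supported] at *
  calc ((a * b).coeff.support : Set M) ⊆ ↑(a.coeff.support * b.coeff.support) :=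
        Finset.coe_subset.mpr (support_coeff_mul_subset a b)
    _ ⊆ s * t := by rw [Finset.coe_mul]; exact Set.mul_subset_mul ha hb
    _ ⊆ u := hst

theorem isInternal_supported_fiber {ι : Type*} [Ring R] [DecidableEq ι] (f : M → ι) :
    DirectSum.IsInternal fun i => supported R R (f ⁻¹' {i}) := by
  rw [DirectSum.isInternal_submodule_iff_iSupIndep_and_iSup_eq_top]
  refine ⟨fun i => ?_, ?_⟩
  · have hle : ⨆ (j) (_ : j ≠ i), supported R R (f ⁻¹' {j}) ≤ supported R R {m | f m ≠ i} :=
      iSup₂_le fun j hj => supported_mono fun m (hm : f m = j) => hm.trans_ne hj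
    refine Disjoint.mono_right hle (Submodule.disjoint_def.mpr fun x hx hx' => ?_)
    rw [mem_supported] at hx hx'
    refine coeff_eq_zero.mp (Finsupp.support_eq_empty.mp ?_)
    exact Finset.eq_empty_of_forall_notMem fun m hm => hx' hm (hx hm)
  · refine Submodule.eq_top_iff'.mpr fun x => ?_
    induction x using MonoidAlgebra.induction with
    | zero => exact zero_mem _
    | single_add m r x _ _ ih =>
      refine add_mem (Submodule.mem_iSup_of_mem (f m) (mem_supported.mpr ?_)) ih
      intro m' hm'
      rw [coeff_single] at hm'
      rw [Finset.mem_singleton.mp (Finsupp.support_single_subset hm')]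
      rfl

end MonoidAlgebra

namespace FreeGroup

variable {α : Type*}

theorem isReduced_map_true (l : List α) : IsReduced (l.map (·, true)) := by
  simpa [IsReduced, List.isChain_map] using
    (List.pairwise_of_forall fun _ _ => trivial).isChain

theorem toWord_lift_of [DecidableEq α] (w : FreeMonoid α) :
    (FreeMonoid.lift of w).toWord = w.toList.map (·, true) := by
  induction w using FreeMonoid.inductionOn' with
  | one => rfl
  | of_mul a w ih =>
    rw [_root_.map_mul, FreeMonoid.lift_eval_of, toWord_mul, toWord_of, ih, List.singleton_append,
      FreeMonoid.toList_of_mul, List.map_cons]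
    exact (isReduced_map_true (a :: w.toList)).reduce_eq

theorem lift_of_injective : Function.Injective (FreeMonoid.lift (of : α → FreeGroup α)) := by
  classical
  intro w w' h
  have := congrArg toWord h
  rw [toWord_lift_of, toWord_lift_of] at this
  exact FreeMonoid.toList.injective
    (List.map_injective_iff.mpr (fun _ _ h => (Prod.mk.inj h).1) this)

end FreeGroup

theorem sdeg_mul (n : ℕ) (m₁ m₂ : FreeMonoid (XTTn n)) :
    sdeg n (m₁ * m₂) = (muHom n m₂)⁻¹ * sdeg n m₁ * muHom n m₂ * sdeg n m₂ := by
  simp only [sdeg, map_mul]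
  group

theorem sdeg_map_inl (n : ℕ) (w : FreeMonoid (Fin n)) :
    sdeg n (FreeMonoid.map Sum.inl w) = FreeMonoid.lift FreeGroup.of w := by
  have hμ : (muHom n).comp (FreeMonoid.map Sum.inl) = 1 := FreeMonoid.hom_eq fun _ => rfl
  have hlam : (lamHom n).comp (FreeMonoid.map Sum.inl) = FreeMonoid.lift FreeGroup.of :=
    FreeMonoid.hom_eq fun _ => rfl
  rw [sdeg, ← MonoidHom.comp_apply, ← MonoidHom.comp_apply, hμ, hlam, MonoidHom.one_apply,
    inv_one, one_mul]

theorem InX.exists_map_inl {n : ℕ} {m : FreeMonoid (XTTn n)} (hm : InX n m) :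
    ∃ w : FreeMonoid (Fin n), FreeMonoid.map Sum.inl w = m := by
  induction m using FreeMonoid.inductionOn' with
  | one => exact ⟨1, rfl⟩
  | of_mul a m ih =>
    obtain ⟨i, rfl⟩ := hm a List.mem_cons_self
    obtain ⟨w, rfl⟩ := ih fun u hu => hm u (List.mem_cons_of_mem _ hu)
    exact ⟨FreeMonoid.of i * w, rfl⟩

theorem sdeg_injOn_inX (n : ℕ) : Set.InjOn (sdeg n) {m | InX n m} := by
  rintro _ hm _ hm' h
  obtain ⟨w, rfl⟩ := InX.exists_map_inl hm
  obtain ⟨w', rfl⟩ := InX.exists_map_inl hm'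
  rw [sdeg_map_inl, sdeg_map_inl] at h
  exact congrArg _ (FreeGroup.lift_of_injective h)

theorem sdeg_separating_pseudograding_general (K : Type*) [Field K] (n : ℕ)
    (S : FreeGroup (Fin n) → AddSubgroup (MonoidAlgebra K (FreeMonoid (XTTn n))))
    (hS : ∀ α : FreeGroup (Fin n), (S α : Set (MonoidAlgebra K (FreeMonoid (XTTn n)))) =
      (Submodule.span K ((fun m => MonoidAlgebra.of K (FreeMonoid (XTTn n)) m) ''
        {m : FreeMonoid (XTTn n) | sdeg n m = α}) :
          Set (MonoidAlgebra K (FreeMonoid (XTTn n))))) :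
    DirectSum.IsInternal S ∧
      (∀ α : FreeGroup (Fin n), ∀ a ∈ S 1, ∀ b ∈ S α, a * b ∈ S α) ∧
      (∀ m m' : FreeMonoid (XTTn n), InX n m → InX n m' → sdeg n m = sdeg n m' → m = m') ∧
      (∀ α : FreeGroup (Fin n), ∀ m m' : FreeMonoid (XTTn n), InX n m → InX n m' →
        MonoidAlgebra.of K (FreeMonoid (XTTn n)) m ∈ S α →
        MonoidAlgebra.of K (FreeMonoid (XTTn n)) m' ∈ S α → m = m') := by
  obtain rfl : S = fun α => (MonoidAlgebra.supported K K (sdeg n ⁻¹' {α})).toAddSubgroup :=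
    funext fun α => SetLike.coe_injective <| (hS α).trans <|
      congrArg SetLike.coe (MonoidAlgebra.span_of_image_eq_supported _)
  refine ⟨MonoidAlgebra.isInternal_supported_fiber (sdeg n), fun α a ha b hb => ?_,
    fun m m' hm hm' => sdeg_injOn_inX n hm hm', fun α m m' hm hm' h h' => ?_⟩
  · refine MonoidAlgebra.mul_mem_supported ?_ ha hb
    rintro _ ⟨m₁, (h₁ : sdeg n m₁ = 1), m₂, (h₂ : sdeg n m₂ = α), rfl⟩
    rw [Set.mem_preimage, Set.mem_singleton_iff, sdeg_mul, h₁, h₂]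
    group
  · exact sdeg_injOn_inX n hm hm' ((MonoidAlgebra.of_mem_supported_iff.mp h).trans
      (MonoidAlgebra.of_mem_supported_iff.mp h').symm)

/-- **The `sdeg`-decomposition is a separating `F_n`-pseudograding for `⟨X⟩`.**
For `α ∈ F_n`, let `S α ⊆ K⟨X,T,T⁻¹⟩` be the `K`-linear span of the monomials `m` with
`sdeg(m) = α` (the free algebra is realized as the monoid algebra of the free monoid
`⟨X,T,T⁻¹⟩`).  Then (i) `K⟨X,T,T⁻¹⟩` is the internal direct sum of the additive subgroups
`S α`; (ii) `S 1 · S α ⊆ S α` for all `α`; (iii) `sdeg` is injective on the submonoid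
`⟨X⟩`; hence (iv) each `S α` contains at most one monomial from `⟨X⟩`. -/
theorem sdeg_separating_pseudograding (K : Type*) [Field K] (n : ℕ) (hn : 0 < n)
    (S : FreeGroup (Fin n) → AddSubgroup (MonoidAlgebra K (FreeMonoid (XTTn n))))
    (hS : ∀ α : FreeGroup (Fin n), (S α : Set (MonoidAlgebra K (FreeMonoid (XTTn n)))) =
      (Submodule.span K ((fun m => MonoidAlgebra.of K (FreeMonoid (XTTn n)) m) ''
        {m : FreeMonoid (XTTn n) | sdeg n m = α}) :
          Set (MonoidAlgebra K (FreeMonoid (XTTn n))))) :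
    DirectSum.IsInternal S ∧
      (∀ α : FreeGroup (Fin n), ∀ a ∈ S 1, ∀ b ∈ S α, a * b ∈ S α) ∧
      (∀ m m' : FreeMonoid (XTTn n), InX n m → InX n m' → sdeg n m = sdeg n m' → m = m') ∧
      (∀ α : FreeGroup (Fin n), ∀ m m' : FreeMonoid (XTTn n), InX n m → InX n m' →
        MonoidAlgebra.of K (FreeMonoid (XTTn n)) m ∈ S α →
        MonoidAlgebra.of K (FreeMonoid (XTTn n)) m' ∈ S α → m = m') :=
  sdeg_separating_pseudograding_general K n S hS
end
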